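/- arXiv:2204.13401 — 2 statements merged into one kernel-verified Lean document; each statement's English description precedes it below -/
import Mathlib

section
/- For any bounded meet-semilattice A, the map θ sending a ∈ A to the set of proper nonempty filters containing a is an injective bounded-semilattice homomorphism from A into the semilattice of clopen filters of the filter space of A, and every clopen filter of this space equals θ(a) for some a ∈ A. -/
/-- A filter of a meet-semilattice: an upward-closed subset closed under binary
meets. -/
def IsFilt {X : Type*} [SemilatticeInf X] (s : Set X) : Prop :=
  (∀ x y : X, x ∈ s → x ≤ y → y ∈ s) ∧ ∀ x y : X, x ∈ s → y ∈ s → x ⊓ y ∈ s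

variable (A : Type*) [SemilatticeInf A] [BoundedOrder A]

/-- The points of the dual space of a bounded meet-semilattice `A`: the proper
nonempty filters of `A`. -/
def Pt : Type _ := {x : Set A // IsFilt x ∧ x.Nonempty ∧ ⊥ ∉ x}

/-- The basic sets `θ a = {x : a ∈ x}`. -/
def theta (a : A) : Set (Pt A) := {x : Pt A | a ∈ x.1}

/-- The Stone-type topology on the space of proper nonempty filters of `A`. -/
def ptTop : TopologicalSpace (Pt A) :=
  TopologicalSpace.generateFrom
    ({s | ∃ a : A, s = theta A a} ∪ {s | ∃ a : A, s = (theta A a)ᶜ})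

/-- A filter of the dual space, whose points are ordered by inclusion and whose
meets are intersections: a set of points upward-closed under inclusion and
closed under (pointwise) intersection. -/
def IsFiltPt (F : Set (Pt A)) : Prop :=
  (∀ x y : Pt A, x ∈ F → x.1 ⊆ y.1 → y ∈ F) ∧
  (∀ x y : Pt A, x ∈ F → y ∈ F → ∀ z : Pt A, z.1 = x.1 ∩ y.1 → z ∈ F)

/-
Points are proper filters, so `θ` is a bounded meet-homomorphism, and `θ a ⊆ θ b` forces `a ≤ b`
by testing the principal filter of `a`.

The topology is that of pointwise convergence: `p i → z` as soon as, for every `c`, eventually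
`c ∈ p i ↔ c ∈ z`. The intersection `z` of a nonempty clopen filter `F` of points is a point, and
`F`, directed downward under inclusion, converges to `z`; as `F` is closed, `z ∈ F`. As `a` runs
down through `z`, the points `x ∩ z` with `x ∈ θ a` converge to `z`, so since `F` is open there is
`a ∈ z` with `x ∩ z ∈ F` for all `x ∈ θ a`. Upward closure gives `θ a ⊆ F`, and `F ⊆ θ a` because
`a ∈ z`. The empty filter is `θ ⊥`.
-/

open Filter Topology

instance : TopologicalSpace (Pt A) := ptTop A

namespace Pt

variable {A}

lemma mem_of_le (x : Pt A) {a b : A} (ha : a ∈ x.1) (hab : a ≤ b) : b ∈ x.1 :=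
  x.2.1.1 a b ha hab

lemma inf_mem (x : Pt A) {a b : A} (ha : a ∈ x.1) (hb : b ∈ x.1) : a ⊓ b ∈ x.1 :=
  x.2.1.2 a b ha hb

lemma top_mem (x : Pt A) : (⊤ : A) ∈ x.1 :=
  let ⟨_, hc⟩ := x.2.2.1
  x.mem_of_le hc le_top

lemma bot_notMem (x : Pt A) : (⊥ : A) ∉ x.1 :=
  x.2.2.2

def principal (a : A) (ha : a ≠ ⊥) : Pt A :=
  ⟨Set.Ici a, ⟨fun _ _ hu huv => hu.trans huv, fun _ _ => le_inf⟩, ⟨a, le_rfl⟩,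
    fun h => ha (le_bot_iff.mp h)⟩

def inf (x y : Pt A) : Pt A :=
  ⟨x.1 ∩ y.1,
    ⟨fun _ _ hu huv => ⟨x.mem_of_le hu.1 huv, y.mem_of_le hu.2 huv⟩,
      fun _ _ hu hv => ⟨x.inf_mem hu.1 hv.1, y.inf_mem hu.2 hv.2⟩⟩,
    ⟨⊤, x.top_mem, y.top_mem⟩, fun h => x.bot_notMem h.1⟩

def sInter (F : Set (Pt A)) (hF : F.Nonempty) : Pt A :=
  ⟨⋂ x ∈ F, x.1,
    ⟨fun _ _ hu huv => Set.mem_iInter₂.mpr fun x hx => x.mem_of_le (Set.mem_iInter₂.mp hu x hx) huv,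
      fun _ _ hu hv => Set.mem_iInter₂.mpr fun x hx =>
        x.inf_mem (Set.mem_iInter₂.mp hu x hx) (Set.mem_iInter₂.mp hv x hx)⟩,
    ⟨⊤, Set.mem_iInter₂.mpr fun x _ => x.top_mem⟩,
    fun h => hF.some.bot_notMem (Set.mem_iInter₂.mp h _ hF.some_mem)⟩

lemma mem_sInter {F : Set (Pt A)} (hF : F.Nonempty) {c : A} :
    c ∈ (sInter F hF).1 ↔ ∀ x ∈ F, c ∈ x.1 :=
  Set.mem_iInter₂

lemma tendsto_nhds_of_eventually_mem_iff {ι : Type*} {l : Filter ι} {p : ι → Pt A} {z : Pt A}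
    (h : ∀ c : A, ∀ᶠ i in l, c ∈ (p i).1 ↔ c ∈ z.1) : Tendsto p l (𝓝 z) := by
  refine TopologicalSpace.tendsto_nhds_generateFrom_iff.mpr ?_
  rintro s (⟨c, rfl⟩ | ⟨c, rfl⟩) hz
  · exact (h c).mono fun i hi => hi.2 hz
  · exact (h c).mono fun i hi => mt hi.1 hz

end Pt

section theta

variable {A}

lemma theta_inf (a b : A) : theta A (a ⊓ b) = theta A a ∩ theta A b :=
  Set.ext fun x =>
    ⟨fun h => ⟨x.mem_of_le h inf_le_left, x.mem_of_le h inf_le_right⟩, fun h => x.inf_mem h.1 h.2⟩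

lemma theta_top : theta A ⊤ = Set.univ :=
  Set.eq_univ_of_forall Pt.top_mem

lemma theta_bot : theta A ⊥ = ∅ :=
  Set.eq_empty_of_forall_notMem Pt.bot_notMem

lemma theta_subset_theta_iff {a b : A} : theta A a ⊆ theta A b ↔ a ≤ b := by
  refine ⟨fun h => ?_, fun hab x hx => x.mem_of_le hx hab⟩
  rcases eq_or_ne a ⊥ with rfl | ha
  · exact bot_le
  · exact h (show Pt.principal a ha ∈ theta A a from le_rfl)

lemma theta_injective : Function.Injective (theta A) := fun _ _ h =>
  le_antisymm (theta_subset_theta_iff.mp h.subset) (theta_subset_theta_iff.mp h.symm.subset)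

lemma isClopen_theta (a : A) : IsClopen (theta A a) :=
  ⟨isOpen_compl_iff.mp (TopologicalSpace.isOpen_generateFrom_of_mem (Or.inr ⟨a, rfl⟩)),
    TopologicalSpace.isOpen_generateFrom_of_mem (Or.inl ⟨a, rfl⟩)⟩

lemma isFiltPt_theta (a : A) : IsFiltPt A (theta A a) :=
  ⟨fun _ _ hx hxy => hxy hx, fun _ _ hx hy z hz => show a ∈ z.1 from hz ▸ ⟨hx, hy⟩⟩

end theta

section clopenFilter

variable {A} {F : Set (Pt A)}

lemma IsFiltPt.inf_mem (hF : IsFiltPt A F) {x y : Pt A} (hx : x ∈ F) (hy : y ∈ F) :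
    x.inf y ∈ F :=
  hF.2 x y hx hy _ rfl

lemma IsFiltPt.sInter_mem (hF : IsFiltPt A F) (hne : F.Nonempty) (hcl : IsClosed F) :
    Pt.sInter F hne ∈ F := by
  have : Nonempty F := hne.to_subtype
  have hdir : Directed (· ≥ ·) fun x : F => {y : Pt A | y ∈ F ∧ y.1 ⊆ x.1.1} := fun x y =>
    ⟨⟨x.1.inf y.1, hF.inf_mem x.2 y.2⟩, fun _ h => ⟨h.1, h.2.trans Set.inter_subset_left⟩,
      fun _ h => ⟨h.1, h.2.trans Set.inter_subset_right⟩⟩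
  have hbasis := hasBasis_iInf_principal hdir
  refine hcl.mem_of_frequently_of_tendsto (f := id)
    (hbasis.frequently_iff.mpr fun x _ => ⟨x.1, ⟨x.2, subset_rfl⟩, x.2⟩)
    (Pt.tendsto_nhds_of_eventually_mem_iff fun c => hbasis.eventually_iff.mpr ?_)
  by_cases hc : ∀ x ∈ F, c ∈ x.1
  · exact ⟨⟨_, hne.some_mem⟩, trivial,
      fun y hy => iff_of_true (hc y hy.1) ((Pt.mem_sInter hne).mpr hc)⟩
  · obtain ⟨x, hx, hcx⟩ := not_forall₂.mp hc
    exact ⟨⟨x, hx⟩, trivial, fun y hy =>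
      iff_of_false (fun h => hcx (hy.2 h)) fun h => hcx ((Pt.mem_sInter hne).mp h x hx)⟩

lemma exists_theta_subset_of_isOpen (hF : IsOpen F)
    (hup : ∀ x y : Pt A, x ∈ F → x.1 ⊆ y.1 → y ∈ F) {z : Pt A} (hz : z ∈ F) :
    ∃ a ∈ z.1, theta A a ⊆ F := by
  have : Nonempty z.1 := ⟨⟨⊤, z.top_mem⟩⟩
  have hdir : Directed (· ≥ ·) fun a : z.1 => theta A a.1 := fun a b =>
    ⟨⟨a.1 ⊓ b.1, z.inf_mem a.2 b.2⟩, theta_subset_theta_iff.mpr inf_le_left,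
      theta_subset_theta_iff.mpr inf_le_right⟩
  have hbasis := hasBasis_iInf_principal hdir
  have htends : Tendsto (fun x => x.inf z) (⨅ a : z.1, 𝓟 (theta A a.1)) (𝓝 z) :=
    Pt.tendsto_nhds_of_eventually_mem_iff fun c => by
      by_cases hc : c ∈ z.1
      · exact hbasis.eventually_iff.mpr ⟨⟨c, hc⟩, trivial, fun x hx => iff_of_true ⟨hx, hc⟩ hc⟩
      · exact Eventually.of_forall fun x => iff_of_false (fun h => hc h.2) hc
  obtain ⟨a, -, ha⟩ := hbasis.mem_iff.mp (htends (hF.mem_nhds hz))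
  exact ⟨a.1, a.2, fun x hx => hup _ x (ha hx) Set.inter_subset_left⟩

lemma IsFiltPt.exists_eq_theta_of_isClopen (hF : IsFiltPt A F) (hcl : IsClopen F) :
    ∃ a : A, F = theta A a := by
  rcases F.eq_empty_or_nonempty with rfl | hne
  · exact ⟨⊥, theta_bot.symm⟩
  obtain ⟨a, ha, hsub⟩ :=
    exists_theta_subset_of_isOpen hcl.isOpen hF.1 (hF.sInter_mem hne hcl.isClosed)
  exact ⟨a, Set.Subset.antisymm (fun x hx => (Pt.mem_sInter hne).mp ha x hx) hsub⟩

end clopenFilter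

/-- The map `θ` is an injective bounded-semilattice homomorphism from `A` into
the semilattice of clopen filters of the dual space of `A`, and every clopen
filter of that space is of the form `θ a`. -/
theorem theta_iso_onto_clopen_filters :
    Function.Injective (theta A) ∧
    (∀ a b : A, theta A (a ⊓ b) = theta A a ∩ theta A b) ∧
    theta A (⊤ : A) = Set.univ ∧
    theta A (⊥ : A) = ∅ ∧
    (∀ a : A, @IsClopen _ (ptTop A) (theta A a) ∧ IsFiltPt A (theta A a)) ∧
    (∀ F : Set (Pt A), @IsClopen _ (ptTop A) F → IsFiltPt A F →
      ∃ a : A, F = theta A a) :=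
  ⟨theta_injective, theta_inf, theta_top, theta_bot,
    fun a => ⟨isClopen_theta a, isFiltPt_theta a⟩,
    fun _ hcl hF => hF.exists_eq_theta_of_isClopen hcl⟩
end

section
/- In an L-space, a filter is open if and only if it is the join (in the lattice of filters) of a family of clopen filters. -/
/-- The join of two filters: the smallest filter containing both. -/
def filtJoin {X : Type*} [SemilatticeInf X] (a b : Set X) : Set X :=
  ⋂₀ {c : Set X | IsFilt c ∧ a ⊆ c ∧ b ⊆ c}

/-- The join of a family of filters: the smallest filter containing all of
them (their supremum in the complete lattice of filters). -/
def filtSJoin {X : Type*} [SemilatticeInf X] (F : Set (Set X)) : Set X :=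
  ⋂₀ {c : Set X | IsFilt c ∧ ∀ a ∈ F, a ⊆ c}

section Aux

variable {X : Type*} [SemilatticeInf X]

lemma isFilt_filtSJoin (F : Set (Set X)) : IsFilt (filtSJoin F) := by
  constructor
  · intro x y hx hxy
    intro c hc
    exact hc.1.1 x y (hx c hc) hxy
  · intro x y hx hy c hc
    exact hc.1.2 x y (hx c hc) (hy c hc)

lemma isFilt_filtJoin (a b : Set X) : IsFilt (filtJoin a b) := by
  constructor
  · intro x y hx hxy c hc
    exact hc.1.1 x y (hx c hc) hxy
  · intro x y hx hy c hc
    exact hc.1.2 x y (hx c hc) (hy c hc)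

lemma subset_filtSJoin {F : Set (Set X)} {a : Set X} (ha : a ∈ F) :
    a ⊆ filtSJoin F := fun x hx c hc => hc.2 a ha hx

lemma filtSJoin_le {F : Set (Set X)} {c : Set X} (hc : IsFilt c)
    (h : ∀ a ∈ F, a ⊆ c) : filtSJoin F ⊆ c :=
  Set.sInter_subset_of_mem ⟨hc, h⟩

lemma left_subset_filtJoin (a b : Set X) : a ⊆ filtJoin a b :=
  fun x hx c hc => hc.2.1 hx

lemma right_subset_filtJoin (a b : Set X) : b ⊆ filtJoin a b :=
  fun x hx c hc => hc.2.2 hx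

lemma filtJoin_le {a b c : Set X} (hc : IsFilt c) (ha : a ⊆ c) (hb : b ⊆ c) :
    filtJoin a b ⊆ c :=
  Set.sInter_subset_of_mem ⟨hc, ha, hb⟩

lemma filtSJoin_mono {F G : Set (Set X)} (h : F ⊆ G) :
    filtSJoin F ⊆ filtSJoin G :=
  filtSJoin_le (isFilt_filtSJoin G) (fun a ha => subset_filtSJoin (h ha))

lemma filtSJoin_empty : filtSJoin (∅ : Set (Set X)) = ∅ := by
  apply Set.Subset.antisymm
  · exact filtSJoin_le ⟨fun x y h _ => h.elim, fun x y h _ => h.elim⟩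
      (fun a ha => ha.elim)
  · exact Set.empty_subset _

lemma filtSJoin_insert (a : Set X) (S : Set (Set X)) :
    filtSJoin (insert a S) = filtJoin a (filtSJoin S) := by
  apply Set.Subset.antisymm
  · apply filtSJoin_le (isFilt_filtJoin _ _)
    intro c hc
    rcases hc with rfl | hc
    · exact left_subset_filtJoin _ _
    · exact (subset_filtSJoin hc).trans (right_subset_filtJoin _ _)
  · apply filtJoin_le (isFilt_filtSJoin _)
    · exact subset_filtSJoin (Set.mem_insert _ _)
    · exact filtSJoin_le (isFilt_filtSJoin _)
        (fun c hc => subset_filtSJoin (Set.mem_insert_of_mem _ hc))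

end Aux

/-- In an L-space (an M-space in which the join of two clopen filters is a
clopen filter), a filter is open iff it is the join of a family of clopen
filters. -/
theorem lspace_open_filter_iff_join_of_clopen {X : Type*} [SemilatticeInf X]
    [TopologicalSpace X] [CompactSpace X]
    (hms : ∀ x y : X, ¬ x ≤ y → ∃ a : Set X, IsClopen a ∧ IsFilt a ∧ x ∈ a ∧ y ∉ a)
    (hls : ∀ a b : Set X, IsClopen a → IsFilt a → IsClopen b → IsFilt b →
      IsClopen (filtJoin a b) ∧ IsFilt (filtJoin a b))
    (b : Set X) (hb : IsFilt b) :
    IsOpen b ↔ ∃ F : Set (Set X), (∀ a ∈ F, IsClopen a ∧ IsFilt a) ∧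
      b = filtSJoin F := by
  constructor
  · -- open filter is the join of its clopen subfilters
    intro hob
    refine ⟨{a | IsClopen a ∧ IsFilt a ∧ a ⊆ b}, fun a ha => ⟨ha.1, ha.2.1⟩, ?_⟩
    apply Set.Subset.antisymm
    · -- b ⊆ filtSJoin F : find for each x ∈ b a clopen subfilter containing x
      intro x hx
      have key : ∃ a : Set X, IsClopen a ∧ IsFilt a ∧ x ∈ a ∧ a ⊆ b := by
        set K := bᶜ with hK
        have hKc : IsCompact K := (hob.isClosed_compl).isCompact
        have hsep : ∀ y : K, ∃ a : Set X, IsClopen a ∧ IsFilt a ∧ x ∈ a ∧ (y : X) ∉ a := by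
          intro y
          apply hms
          intro hle
          exact y.2 (hb.1 x y hx hle)
        choose A hA1 hA2 hA3 hA4 using hsep
        have hcover : K ⊆ ⋃ y : K, (A y)ᶜ := by
          intro z hz
          exact Set.mem_iUnion.2 ⟨⟨z, hz⟩, hA4 ⟨z, hz⟩⟩
        obtain ⟨t, ht⟩ := hKc.elim_finite_subcover (fun y : K => (A y)ᶜ)
          (fun y => (hA1 y).compl.isOpen) hcover
        refine ⟨⋂ y ∈ t, A y, ?_, ?_, ?_, ?_⟩
        · exact isClopen_biInter_finset (fun y _ => hA1 y)
        · constructor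
          · intro u v hu huv
            simp only [Set.mem_iInter] at hu ⊢
            exact fun y hy => (hA2 y).1 u v (hu y hy) huv
          · intro u v hu hv
            simp only [Set.mem_iInter] at hu hv ⊢
            exact fun y hy => (hA2 y).2 u v (hu y hy) (hv y hy)
        · simp only [Set.mem_iInter]
          exact fun y _ => hA3 y
        · intro z hz
          by_contra hzb
          have : z ∈ ⋃ y ∈ t, (A y)ᶜ := ht hzb
          simp only [Set.mem_iUnion, Set.mem_compl_iff] at this
          obtain ⟨y, hy, hzy⟩ := this
          simp only [Set.mem_iInter] at hz
          exact hzy (hz y hy)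
      obtain ⟨a, ha1, ha2, ha3, ha4⟩ := key
      exact subset_filtSJoin (F := {a | IsClopen a ∧ IsFilt a ∧ a ⊆ b})
        ⟨ha1, ha2, ha4⟩ ha3
    · exact filtSJoin_le hb (fun a ha => ha.2.2)
  · -- a join of clopen filters is open
    rintro ⟨F, hF, rfl⟩
    -- finite joins are clopen filters
    have hfin : ∀ S : Finset (Set X), (↑S : Set (Set X)) ⊆ F →
        IsClopen (filtSJoin (↑S : Set (Set X))) ∧
          IsFilt (filtSJoin (↑S : Set (Set X))) := by
      classical
      intro S
      refine Finset.induction_on S ?_ ?_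
      · intro _
        rw [Finset.coe_empty, filtSJoin_empty]
        exact ⟨isClopen_empty, ⟨fun x y h _ => h.elim, fun x y h _ => h.elim⟩⟩
      · intro a S ha ih hsub
        rw [Finset.coe_insert] at hsub ⊢
        rw [filtSJoin_insert]
        have haF := hF a (hsub (Set.mem_insert _ _))
        have hS := ih (fun c hc => hsub (Set.mem_insert_of_mem _ hc))
        exact hls a _ haF.1 haF.2 hS.1 hS.2
    -- the join of F is the union of the finite joins
    classical
    have hunion : filtSJoin F =
        ⋃ S ∈ {S : Finset (Set X) | (↑S : Set (Set X)) ⊆ F}, filtSJoin ↑S := by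
      apply Set.Subset.antisymm
      · apply filtSJoin_le
        · constructor
          · intro x y hx hxy
            simp only [Set.mem_iUnion] at hx ⊢
            obtain ⟨S, hS, hxS⟩ := hx
            exact ⟨S, hS, (isFilt_filtSJoin _).1 x y hxS hxy⟩
          · intro x y hx hy
            simp only [Set.mem_iUnion] at hx hy ⊢
            obtain ⟨S, hS, hxS⟩ := hx
            obtain ⟨T, hT, hyT⟩ := hy
            refine ⟨S ∪ T, ?_, ?_⟩
            · show (↑(S ∪ T) : Set (Set X)) ⊆ F
              rw [Finset.coe_union]
              exact Set.union_subset hS hT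
            · apply (isFilt_filtSJoin _).2
              · exact filtSJoin_mono (by rw [Finset.coe_union]; exact Set.subset_union_left) hxS
              · exact filtSJoin_mono (by rw [Finset.coe_union]; exact Set.subset_union_right) hyT
        · intro a ha
          have : a ⊆ filtSJoin (↑({a} : Finset (Set X))) := by
            rw [Finset.coe_singleton]
            exact subset_filtSJoin rfl
          refine this.trans ?_
          refine Set.subset_biUnion_of_mem (u := fun S : Finset (Set X) => filtSJoin (↑S : Set (Set X))) ?_
          show (↑({a} : Finset (Set X)) : Set (Set X)) ⊆ F
          rw [Finset.coe_singleton]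
          exact Set.singleton_subset_iff.2 ha
      · apply Set.iUnion₂_subset
        intro S hS
        exact filtSJoin_mono hS
    rw [hunion]
    exact isOpen_biUnion (fun S hS => (hfin S hS).1.isOpen)
end
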